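/- Suppose the grading of L satisfies L_i = 0 for i < −q and for i > s, where s ≥ q ≥ 1; suppose L_j = (ad L_{−1})^{s−j} L_s for all −q ≤ j < s; suppose condition (F1) holds; and suppose (ad L_{−q})^2 L ≠ 0, i.e. [L_{−q}, [L_{−q}, L]] ≠ 0. Then [L_{−q}, [L_{−q}, L_q]] ≠ 0. (Corollary 2.11.) -/

import Mathlib

/- Graded Lie algebra setting: `F` a field of characteristic 3, `A` a
finite-dimensional Lie algebra over `F`, with a `ℤ`-grading `L : ℤ → Submodule F A`. -/

namespace GradedLie

variable {F A : Type*} [Field F] [CharP F 3] [LieRing A] [LieAlgebra F A]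

/-- The linear span of all brackets `⁅u, v⁆` with `u ∈ U`, `v ∈ V`. -/
def bSpan (U V : Submodule F A) : Submodule F A :=
  Submodule.span F {z | ∃ u ∈ U, ∃ v ∈ V, z = ⁅u, v⁆}

/-- `M` is an irreducible `L0`-module under the adjoint action:
`M ≠ 0` and the only `L0`-submodules of `M` are `0` and `M`. -/
def IsIrred (L0 M : Submodule F A) : Prop :=
  M ≠ ⊥ ∧ ∀ V ≤ M, bSpan L0 V ≤ V → V = ⊥ ∨ V = M

/-- `adPow U V k = (ad U)^k V`, the `k`-fold iterated bracket span. -/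
def adPow (U V : Submodule F A) : ℕ → Submodule F A
  | 0 => V
  | (k + 1) => bSpan U (adPow U V k)

end GradedLie

/-! Let `Q = L (-q)`. Since `[L (-1), Q] ⊆ L (-q-1) = 0`, `ad L (-1)` commutes with `ad Q`, so
`[L (-1), (ad Q)^k L j] ⊆ (ad Q)^k L (j - 1)`. The space `(ad Q)^k L j` lies in degree `j - kq`;
as long as that degree exceeds `-q`, (F1) says `L (-1)` does not kill it, so its nonvanishing
propagates from `j` down to `j - 1`. Some `j` has `(ad Q)^k L j ≠ 0` because `(ad Q)^k L ≠ 0`, and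
then `j - kq ≥ -q`; descending to `j = (k - 1) q` gives `(ad Q)^k L_{(k-1)q} ≠ 0`, which for
`k = 2` is the claim. -/

namespace GradedLie

variable {F A : Type*} [Field F] [LieRing A] [LieAlgebra F A]

section BracketSpan

variable {U V W : Submodule F A}

lemma lie_mem_bSpan {u v : A} (hu : u ∈ U) (hv : v ∈ V) : ⁅u, v⁆ ∈ bSpan U V :=
  Submodule.subset_span ⟨u, hu, v, hv, rfl⟩

lemma bSpan_le (h : ∀ u ∈ U, ∀ v ∈ V, ⁅u, v⁆ ∈ W) : bSpan U V ≤ W :=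
  Submodule.span_le.2 fun _ ⟨u, hu, v, hv, hz⟩ => hz ▸ h u hu v hv

lemma bSpan_mono (h : V ≤ W) : bSpan U V ≤ bSpan U W :=
  bSpan_le fun _ hu _ hv => lie_mem_bSpan hu (h hv)

lemma bSpan_iSup_le {ι : Type*} (V : ι → Submodule F A) :
    bSpan U (⨆ i, V i) ≤ ⨆ i, bSpan U (V i) := by
  refine bSpan_le fun u hu v hv => ?_
  refine Submodule.iSup_induction (motive := fun w => ⁅u, w⁆ ∈ ⨆ i, bSpan U (V i)) V hv
    (fun i x hx => le_iSup (fun i => bSpan U (V i)) i (lie_mem_bSpan hu hx)) (by simp) ?_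
  intro x y hx hy
  rw [lie_add]
  exact add_mem hx hy

lemma bSpan_bSpan_le_of_lie_eq_zero (h : ∀ u ∈ U, ∀ w ∈ W, ⁅u, w⁆ = 0) :
    bSpan U (bSpan W V) ≤ bSpan W (bSpan U V) := by
  refine bSpan_le fun u hu t ht => ?_
  induction ht using Submodule.span_induction with
  | mem z hz =>
    obtain ⟨w, hw, v, hv, rfl⟩ := hz
    rw [leibniz_lie, h u hu w hw, zero_lie, zero_add]
    exact lie_mem_bSpan hw (lie_mem_bSpan hu hv)
  | zero => simp
  | add x y _ _ hx hy => rw [lie_add]; exact add_mem hx hy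
  | smul c x _ hx => rw [lie_smul]; exact Submodule.smul_mem _ c hx

end BracketSpan

section IteratedBracketSpan

variable {U V W : Submodule F A}

lemma adPow_iSup_le {ι : Type*} (V : ι → Submodule F A) :
    ∀ k, adPow U (⨆ i, V i) k ≤ ⨆ i, adPow U (V i) k
  | 0 => le_rfl
  | k + 1 => (bSpan_mono (adPow_iSup_le V k)).trans (bSpan_iSup_le _)

lemma adPow_mono (h : V ≤ W) : ∀ k, adPow U V k ≤ adPow U W k
  | 0 => h
  | k + 1 => bSpan_mono (adPow_mono h k)

lemma bSpan_adPow_le_of_lie_eq_zero (h : ∀ u ∈ U, ∀ w ∈ W, ⁅u, w⁆ = 0) :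
    ∀ k, bSpan U (adPow W V k) ≤ adPow W (bSpan U V) k
  | 0 => le_rfl
  | k + 1 =>
    (bSpan_bSpan_le_of_lie_eq_zero h).trans (bSpan_mono (bSpan_adPow_le_of_lie_eq_zero h k))

end IteratedBracketSpan

section Graded

variable {L : ℤ → Submodule F A} (hgrade : ∀ i j : ℤ, ∀ x ∈ L i, ∀ y ∈ L j, ⁅x, y⁆ ∈ L (i + j))
include hgrade

lemma bSpan_le_of_isGraded (i j : ℤ) : bSpan (L i) (L j) ≤ L (i + j) :=
  bSpan_le (hgrade i j)

lemma adPow_le_of_isGraded (i j : ℤ) : ∀ k : ℕ, adPow (L i) (L j) k ≤ L (k * i + j)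
  | 0 => by simp [adPow]
  | k + 1 => calc
    bSpan (L i) (adPow (L i) (L j) k) ≤ bSpan (L i) (L (k * i + j)) :=
      bSpan_mono (adPow_le_of_isGraded i j k)
    _ ≤ L (i + (k * i + j)) := bSpan_le_of_isGraded hgrade _ _
    _ = L ((k + 1 : ℕ) * i + j) := by push_cast; ring_nf

lemma lie_eq_zero_of_isGraded {i j : ℤ} (hij : L (i + j) = ⊥) :
    ∀ x ∈ L i, ∀ y ∈ L j, ⁅x, y⁆ = 0 := fun x hx y hy => by
  simpa [hij] using hgrade i j x hx y hy

variable {q : ℤ} (hbound : ∀ i : ℤ, i < -q → L i = ⊥)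
  (hF1 : ∀ i : ℤ, -q < i → ∀ x ∈ L i, x ≠ 0 → ∃ y ∈ L (-1), ⁅y, x⁆ ≠ 0)
include hbound hF1

lemma adPow_pred_ne_bot {k : ℕ} {j : ℤ} (hj : -q < k * -q + j)
    (hne : adPow (L (-q)) (L j) k ≠ ⊥) : adPow (L (-q)) (L (j - 1)) k ≠ ⊥ := by
  obtain ⟨x, hx, hx0⟩ := Submodule.exists_mem_ne_zero_of_ne_bot hne
  obtain ⟨y, hy, hyx⟩ := hF1 _ hj x (adPow_le_of_isGraded hgrade _ _ k hx) hx0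
  have hcomm : ∀ u ∈ L (-1), ∀ w ∈ L (-q), ⁅u, w⁆ = 0 :=
    lie_eq_zero_of_isGraded hgrade (hbound _ (by omega))
  have hle : bSpan (L (-1)) (adPow (L (-q)) (L j) k) ≤ adPow (L (-q)) (L (j - 1)) k :=
    (bSpan_adPow_le_of_lie_eq_zero hcomm k).trans <| adPow_mono
      ((bSpan_le_of_isGraded hgrade _ _).trans (by rw [neg_add_eq_sub])) k
  exact (Submodule.ne_bot_iff _).2 ⟨_, hle (lie_mem_bSpan hy hx), hyx⟩

theorem adPow_ne_bot_of_isGraded (hsup : iSup L = ⊤) (k : ℕ)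
    (hne : adPow (L (-q)) ⊤ k ≠ ⊥) : adPow (L (-q)) (L ((k - 1) * q)) k ≠ ⊥ := by
  obtain ⟨j, hj⟩ : ∃ j, adPow (L (-q)) (L j) k ≠ ⊥ := by
    by_contra! h
    refine hne (eq_bot_iff.2 ?_)
    simpa [← hsup, h] using adPow_iSup_le (U := L (-q)) L k
  have hjk : (k - 1) * q ≤ j := by
    by_contra! hlt
    exact hj (eq_bot_iff.2 <| (adPow_le_of_isGraded hgrade _ _ k).trans
      (hbound _ (by linarith)).le)
  induction j, hjk using Int.leInduction with
  | base => exact hj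
  | succ n hn ih =>
    exact ih (by simpa using adPow_pred_ne_bot hgrade hbound hF1 (by linarith) hj)

end Graded

end GradedLie

namespace GradedLie

variable {F A : Type*} [Field F] [CharP F 3] [LieRing A] [LieAlgebra F A]

theorem corollary_2_11_general
    (L : ℤ → Submodule F A)
    (hdecomp : DirectSum.IsInternal L)
    (hgrade : ∀ i j : ℤ, ∀ x ∈ L i, ∀ y ∈ L j, ⁅x, y⁆ ∈ L (i + j))
    (q s : ℤ)
    (hbound : ∀ i : ℤ, i < -q ∨ s < i → L i = ⊥)
    (hF1 : ∀ i : ℤ, -q < i → ∀ x ∈ L i, x ≠ 0 → ∃ y ∈ L (-1), ⁅y, x⁆ ≠ 0)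
    (hne : bSpan (L (-q)) (bSpan (L (-q)) (⊤ : Submodule F A)) ≠ ⊥) :
    bSpan (L (-q)) (bSpan (L (-q)) (L q)) ≠ ⊥ := by
  simpa [adPow] using adPow_ne_bot_of_isGraded hgrade (fun i hi => hbound i (Or.inl hi)) hF1
    hdecomp.submodule_iSup_eq_top 2 hne

/-- Corollary 2.11: if `L j = (ad L (-1))^(s-j) (L s)` for `-q ≤ j < s`, (F1)
holds, and `(ad L (-q))^2 L ≠ 0`, then `[L (-q), [L (-q), L q]] ≠ 0`. -/
theorem corollary_2_11
    [FiniteDimensional F A]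
    (L : ℤ → Submodule F A)
    (hdecomp : DirectSum.IsInternal L)
    (hgrade : ∀ i j : ℤ, ∀ x ∈ L i, ∀ y ∈ L j, ⁅x, y⁆ ∈ L (i + j))
    (q s : ℤ) (hq : 1 ≤ q) (hs : q ≤ s)
    (hbound : ∀ i : ℤ, i < -q ∨ s < i → L i = ⊥)
    (hbot : L (-q) ≠ ⊥)
    (hLj : ∀ j : ℤ, -q ≤ j → j < s → L j = adPow (L (-1)) (L s) (s - j).toNat)
    (hF1 : ∀ i : ℤ, -q < i → ∀ x ∈ L i, x ≠ 0 → ∃ y ∈ L (-1), ⁅y, x⁆ ≠ 0)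
    (hne : bSpan (L (-q)) (bSpan (L (-q)) (⊤ : Submodule F A)) ≠ ⊥) :
    bSpan (L (-q)) (bSpan (L (-q)) (L q)) ≠ ⊥ :=
  corollary_2_11_general L hdecomp hgrade q s hbound hF1 hne

end GradedLie
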